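/- Let q be an odd prime power with q ≢ 1 (mod 4) and q ≢ 1 (mod 3). For the C2F2 pencil X_ψ : x₀³x₁ + x₁⁴ + x₂⁴ + x₃⁴ = 12ψ x₀x₁x₂x₃ in ℙ³ over F_q, the number of points with at least one zero coordinate is #X_ψ(F_q) − #U_ψ(F_q) = 3q + 1, where U_ψ is the intersection of X_ψ with the open torus. -/

import Mathlib

/-!
On the chart `x₁ = 1` a boundary point has `x₀x₂x₃ = 0`, so the `ψ`-term vanishes and the
equation reads `x₀³ = -(1 + x₂⁴ + x₃⁴)`. As `3 ∤ q - 1`, cubing is a bijection of `F_q`: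
over each `(x₂, x₃)` with `x₂x₃ = 0` there is exactly one point, and over the others only
`x₀ = 0`, which requires `x₂⁴ + x₃⁴ = -1`. Since `q ≡ 3 (mod 4)`, `-1` is not a square, so
these two cases are disjoint, and `x ↦ x^((q+3)/2)` is a bijection whose square is `x ↦ x⁴`;
hence `#{x₂⁴ + x₃⁴ = -1} = #{y² + z² = -1} = q + 1`, all fibres of the norm form `y² + z²`
of `F_q(i)` over `F_qˣ` having the same size. This gives `(2q - 1) + (q + 1)` points on the
chart. On the hyperplane `x₁ = 0` the equation becomes `x₂⁴ + x₃⁴ = 0`, leaving only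
`(1:0:0:0)`.
-/

/-- The defining polynomial of the `C2F2` pencil
`x₀³x₁ + x₁⁴ + x₂⁴ + x₃⁴ - 12ψx₀x₁x₂x₃`. -/
def fC2F2 {F : Type} [Field F] (ψ : F) (x : Fin 4 → F) : F :=
  x 0 ^ 3 * x 1 + x 1 ^ 4 + x 2 ^ 4 + x 3 ^ 4 -
    12 * ψ * (x 0 * x 1 * x 2 * x 3)

namespace FiniteField

variable {F : Type*} [Field F] [Fintype F]

theorem pow_bijective_of_coprime {n : ℕ} (hn0 : n ≠ 0) (hn : (Fintype.card F - 1).Coprime n) :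
    Function.Bijective fun x : F => x ^ n := by
  refine Finite.injective_iff_bijective.mp fun x y hxy => ?_
  rcases eq_or_ne x 0 with rfl | hx
  · exact ((pow_eq_zero_iff hn0).mp ((zero_pow hn0).symm.trans hxy).symm).symm
  have hy : y ≠ 0 := by
    rintro rfl
    exact hx ((pow_eq_zero_iff hn0).mp (hxy.trans (zero_pow hn0)))
  have hunits : (Nat.card Fˣ).Coprime n := by rwa [Nat.card_units, Nat.card_eq_fintype_card]
  have := hunits.pow_left_bijective.injective (a₁ := Units.mk0 x hx) (a₂ := Units.mk0 y hy)
    (Units.ext (by simpa using hxy))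
  simpa using congrArg Units.val this

theorem pow_three_bijective (h3 : Fintype.card F % 3 ≠ 1) :
    Function.Bijective fun x : F => x ^ 3 := by
  have := Fintype.one_lt_card (α := F)
  refine pow_bijective_of_coprime three_ne_zero ((Nat.Prime.coprime_iff_not_dvd ?_).mpr ?_).symm
  · norm_num
  · omega

theorem exists_bijective_sq_eq_pow_four (h4 : Fintype.card F % 4 = 3) :
    ∃ β : F → F, Function.Bijective β ∧ ∀ x, β x ^ 2 = x ^ 4 := by
  obtain ⟨k, hk⟩ : ∃ k, Fintype.card F = 4 * k + 3 := ⟨Fintype.card F / 4, by omega⟩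
  refine ⟨fun x => x ^ (2 * k + 3), pow_bijective_of_coprime (by omega) ?_, fun x => ?_⟩
  · rw [hk, show 4 * k + 3 - 1 = 4 * k + 2 by omega, ← Nat.isCoprime_iff_coprime]
    exact ⟨k ^ 2 + 3 * k + 2, 2 * k + 3 - 2 * (k ^ 2 + 3 * k + 2), by push_cast; ring⟩
  · calc (x ^ (2 * k + 3)) ^ 2 = x ^ Fintype.card F * x ^ 3 := by rw [hk]; ring
      _ = x ^ 4 := by rw [pow_card]; ring

theorem exists_sq_add_sq (hodd : Odd (Fintype.card F)) (x : F) :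
    ∃ a b : F, a ^ 2 + b ^ 2 = x := by
  obtain ⟨a, b, hab⟩ := exists_root_sum_quadratic (Polynomial.degree_X_pow 2)
    (Polynomial.degree_X_pow_sub_C two_pos x) (Nat.odd_iff.mp hodd)
  exact ⟨a, b, by simpa [← add_sub_assoc, sub_eq_zero] using hab⟩

end FiniteField

open Finset

section

variable {F : Type*} [Field F]

theorem eq_zero_of_sq_add_sq_eq_zero (hF : ¬IsSquare (-1 : F)) {a b : F} (h : a ^ 2 + b ^ 2 = 0) :
    a = 0 := by
  by_contra ha
  exact hF ⟨b / a, by field_simp; linear_combination -h⟩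

theorem sq_add_sq_eq_zero_iff (hF : ¬IsSquare (-1 : F)) {a b : F} :
    a ^ 2 + b ^ 2 = 0 ↔ a = 0 ∧ b = 0 := by
  refine ⟨fun h => ⟨eq_zero_of_sq_add_sq_eq_zero hF h,
    eq_zero_of_sq_add_sq_eq_zero hF (b := a) (by linear_combination h)⟩, ?_⟩
  rintro ⟨rfl, rfl⟩
  ring

theorem pow_four_add_pow_four_ne_neg_one_of_mul_eq_zero (hF : ¬IsSquare (-1 : F)) {a b : F}
    (h : a * b = 0) : a ^ 4 + b ^ 4 ≠ -1 := by
  intro h'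
  rcases mul_eq_zero.mp h with rfl | rfl
  · exact hF ⟨b ^ 2, by linear_combination -h'⟩
  · exact hF ⟨a ^ 2, by linear_combination -h'⟩

variable [Fintype F] [DecidableEq F]

theorem card_sq_add_sq_eq_le_mul (s t d : F) (hst : s ^ 2 + t ^ 2 ≠ 0) :
    #{p : F × F | p.1 ^ 2 + p.2 ^ 2 = d} ≤
      #{p : F × F | p.1 ^ 2 + p.2 ^ 2 = (s ^ 2 + t ^ 2) * d} := by
  -- multiplication by `s + t i` in `F(i)`
  refine card_le_card_of_injOn (fun p => (s * p.1 - t * p.2, s * p.2 + t * p.1)) ?_ ?_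
  · intro p hp
    simp only [coe_filter, mem_univ, true_and, Set.mem_ofPred_eq] at hp ⊢
    linear_combination (s ^ 2 + t ^ 2) * hp
  · rintro ⟨a, b⟩ - ⟨a', b'⟩ - h
    simp only [Prod.mk.injEq] at h
    obtain ⟨h1, h2⟩ := h
    have ha : (s ^ 2 + t ^ 2) * (a - a') = 0 := by linear_combination s * h1 + t * h2
    have hb : (s ^ 2 + t ^ 2) * (b - b') = 0 := by linear_combination s * h2 - t * h1
    simp only [mul_eq_zero, hst, false_or, sub_eq_zero] at ha hb
    rw [ha, hb]

theorem card_sq_add_sq_eq_eq_of_ne_zero (hodd : Odd (Fintype.card F)) {c d : F} (hc : c ≠ 0)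
    (hd : d ≠ 0) :
    #{p : F × F | p.1 ^ 2 + p.2 ^ 2 = c} = #{p : F × F | p.1 ^ 2 + p.2 ^ 2 = d} := by
  have key : ∀ c d : F, c ≠ 0 → d ≠ 0 →
      #{p : F × F | p.1 ^ 2 + p.2 ^ 2 = c} ≤ #{p : F × F | p.1 ^ 2 + p.2 ^ 2 = d} := by
    intro c d hc hd
    obtain ⟨s, t, hst⟩ := FiniteField.exists_sq_add_sq hodd (d / c)
    have := card_sq_add_sq_eq_le_mul s t c (by rw [hst]; exact div_ne_zero hd hc)
    rwa [hst, div_mul_cancel₀ d hc] at this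
  exact (key c d hc hd).antisymm (key d c hd hc)

theorem card_sq_add_sq_eq (hodd : Odd (Fintype.card F)) (hF : ¬IsSquare (-1 : F)) {d : F}
    (hd : d ≠ 0) : #{p : F × F | p.1 ^ 2 + p.2 ^ 2 = d} = Fintype.card F + 1 := by
  set q := Fintype.card F
  have hfib : #{p : F × F | p.1 ^ 2 + p.2 ^ 2 ≠ 0} =
      (q - 1) * #{p : F × F | p.1 ^ 2 + p.2 ^ 2 = d} := by
    rw [card_eq_sum_card_fiberwise (f := fun p : F × F => p.1 ^ 2 + p.2 ^ 2) (t := univ.erase 0)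
      (fun p hp => by simpa using hp)]
    rw [show q - 1 = #(univ.erase (0 : F)) by simp [q]]
    refine sum_const_nat fun c hc => ?_
    rw [filter_filter, ← card_sq_add_sq_eq_eq_of_ne_zero hodd (ne_of_mem_erase hc) hd]
    congr 1
    refine filter_congr fun p _ => ⟨And.right, fun h => ⟨h ▸ ne_of_mem_erase hc, h⟩⟩
  have hne : #{p : F × F | p.1 ^ 2 + p.2 ^ 2 ≠ 0} = q * q - 1 := by
    simp_rw [ne_eq, sq_add_sq_eq_zero_iff hF, ← Prod.mk_eq_zero, Prod.mk.eta]
    rw [filter_ne' univ 0, card_erase_of_mem (mem_univ _), card_univ, Fintype.card_prod]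
  have hq : 1 < q := Fintype.one_lt_card
  refine Nat.eq_of_mul_eq_mul_left (Nat.sub_pos_of_lt hq) ?_
  rw [← hfib, hne]
  have hqq : 1 ≤ q * q := Nat.one_le_iff_ne_zero.mpr (by positivity)
  zify [hq.le, hqq]
  ring

theorem card_pow_four_add_pow_four_eq (h4 : Fintype.card F % 4 = 3) (d : F) :
    #{p : F × F | p.1 ^ 4 + p.2 ^ 4 = d} = #{p : F × F | p.1 ^ 2 + p.2 ^ 2 = d} := by
  obtain ⟨β, hβ, hβsq⟩ := FiniteField.exists_bijective_sq_eq_pow_four h4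
  exact card_bijective (Prod.map β β) (hβ.prodMap hβ) (by simp [hβsq])

theorem card_mul_eq_zero : #{p : F × F | p.1 * p.2 = 0} = 2 * Fintype.card F - 1 := by
  have hne : #{p : F × F | ¬p.1 * p.2 = 0} = (Fintype.card F - 1) * (Fintype.card F - 1) := by
    rw [show ({p : F × F | ¬p.1 * p.2 = 0} : Finset _) = univ.erase 0 ×ˢ univ.erase 0 by
      ext; simp [and_comm]]
    simp
  have := card_filter_add_card_filter_not (s := (univ : Finset (F × F))) (fun p => p.1 * p.2 = 0)
  rw [hne, card_univ, Fintype.card_prod] at this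
  have hq : 1 ≤ Fintype.card F := Fintype.card_pos
  have h2q : 1 ≤ 2 * Fintype.card F := by omega
  zify [hq, h2q] at this ⊢
  linear_combination this

theorem card_mul_eq_zero_or_pow_four_add_pow_four_eq_neg_one (h4 : Fintype.card F % 4 = 3) :
    #{p : F × F | p.1 * p.2 = 0 ∨ p.1 ^ 4 + p.2 ^ 4 = -1} = 3 * Fintype.card F := by
  have hF : ¬IsSquare (-1 : F) := by rw [FiniteField.isSquare_neg_one_iff]; omega
  have hodd : Odd (Fintype.card F) := Nat.odd_iff.mpr (by omega)
  rw [filter_or, card_union_of_disjoint (disjoint_filter.mpr fun p _ h =>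
      pow_four_add_pow_four_ne_neg_one_of_mul_eq_zero hF h),
    card_mul_eq_zero, card_pow_four_add_pow_four_eq h4,
    card_sq_add_sq_eq hodd hF (neg_ne_zero.mpr one_ne_zero)]
  have := Fintype.card_pos (α := F)
  omega

end

namespace Projectivization

open scoped LinearAlgebra.Projectivization

variable {K V : Type*} [Field K] [AddCommGroup V] [Module K V]

theorem card_setOf_rep_apply_ne_zero (p : V → Prop)
    (hp : ∀ (a : Kˣ) (v : V), p (a • v) ↔ p v) (ℓ : Module.Dual K V) :
    Nat.card {P : ℙ K V | p P.rep ∧ ℓ P.rep ≠ 0} =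
      Nat.card {v : V | p v ∧ ℓ v = 1} := by
  refine Nat.card_congr
    { toFun := fun P => ⟨(ℓ P.1.rep)⁻¹ • P.1.rep, ?_⟩
      invFun := fun v => ⟨mk K v.1 (ne_zero_of_map (f := ℓ) (by simp [v.2.2])), ?_⟩
      left_inv := fun P => ?_
      right_inv := fun v => ?_ }
  · obtain ⟨hpP, hℓP⟩ := P.2
    refine ⟨(hp (Units.mk0 _ (inv_ne_zero hℓP)) _).mpr hpP, ?_⟩
    simp [hℓP]
  · obtain ⟨a, ha⟩ := exists_smul_eq_mk_rep K v.1 (ne_zero_of_map (f := ℓ) (by simp [v.2.2]))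
    show p (mk K _ _).rep ∧ ℓ (mk K _ _).rep ≠ 0
    rw [← ha]
    refine ⟨(hp a _).mpr v.2.1, ?_⟩
    simp [Units.smul_def, v.2.2]
  · ext : 1
    conv_rhs => rw [← mk_rep P.1]
    exact (mk_eq_mk_iff' K _ _ _ _).mpr ⟨_, rfl⟩
  · obtain ⟨a, ha⟩ := exists_smul_eq_mk_rep K v.1 (ne_zero_of_map (f := ℓ) (by simp [v.2.2]))
    ext : 1
    simp only [← ha]
    simp [Units.smul_def, v.2.2, smul_smul]

end Projectivization

section C2F2

variable {F : Type} [Field F]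

theorem fC2F2_smul (ψ c : F) (v : Fin 4 → F) : fC2F2 ψ (c • v) = c ^ 4 * fC2F2 ψ v := by
  simp only [fC2F2, Pi.smul_apply, smul_eq_mul]
  ring

theorem fC2F2_eq_of_apply_one_eq_one (ψ : F) {v : Fin 4 → F} (hv1 : v 1 = 1)
    (h : v 0 * v 2 * v 3 = 0) : fC2F2 ψ v = v 0 ^ 3 + 1 + v 2 ^ 4 + v 3 ^ 4 := by
  simp only [fC2F2, hv1]
  linear_combination (-12 * ψ) * h

theorem apply_zero_eq_zero_of_exists_apply_eq_zero {v : Fin 4 → F} (hv1 : v 1 = 1)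
    (h : v 2 * v 3 ≠ 0) (hj : ∃ j, v j = 0) : v 0 = 0 := by
  obtain ⟨j, hj⟩ := hj
  rw [mul_ne_zero_iff] at h
  fin_cases j
  · exact hj
  · exact absurd (hv1 ▸ hj) one_ne_zero
  · exact absurd hj h.1
  · exact absurd hj h.2

theorem card_C2F2_boundary_chart [Fintype F] [DecidableEq F] (h3 : Fintype.card F % 3 ≠ 1)
    (ψ : F) :
    Nat.card {v : Fin 4 → F | (fC2F2 ψ v = 0 ∧ ∃ j, v j = 0) ∧ v 1 = 1} =
      #{p : F × F | p.1 * p.2 = 0 ∨ p.1 ^ 4 + p.2 ^ 4 = -1} := by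
  rw [Nat.card_coe_set_eq, ← Set.ncard_coe_finset]
  refine Set.ncard_congr (fun v _ => (v 2, v 3)) ?_ ?_ ?_
  · rintro v ⟨⟨hf, hj⟩, hv1⟩
    simp only [coe_filter, mem_univ, true_and, Set.mem_ofPred_eq]
    by_cases h : v 2 * v 3 = 0
    · exact Or.inl h
    · right
      have h0 := apply_zero_eq_zero_of_exists_apply_eq_zero hv1 h hj
      rw [fC2F2_eq_of_apply_one_eq_one ψ hv1 (by rw [h0]; ring), h0] at hf
      linear_combination hf
  · rintro v w ⟨⟨hf, hj⟩, hv1⟩ ⟨⟨hf', hj'⟩, hw1⟩ hvw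
    simp only [Prod.mk.injEq] at hvw
    obtain ⟨h2, h3'⟩ := hvw
    have h0 : v 0 = w 0 := by
      by_cases h : v 2 * v 3 = 0
      · rw [fC2F2_eq_of_apply_one_eq_one ψ hv1 (by rw [mul_assoc, h, mul_zero])] at hf
        rw [fC2F2_eq_of_apply_one_eq_one ψ hw1 (by rw [mul_assoc, ← h2, ← h3', h, mul_zero]),
          ← h2, ← h3'] at hf'
        exact (FiniteField.pow_three_bijective h3).injective (by linear_combination hf - hf')
      · rw [apply_zero_eq_zero_of_exists_apply_eq_zero hv1 h hj,
          apply_zero_eq_zero_of_exists_apply_eq_zero hw1 (h2 ▸ h3' ▸ h) hj']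
    funext i
    fin_cases i
    exacts [h0, hv1.trans hw1.symm, h2, h3']
  · rintro ⟨b, c⟩ hbc
    simp only [coe_filter, mem_univ, true_and, Set.mem_ofPred_eq] at hbc
    by_cases h : b * c = 0
    · obtain ⟨a, ha⟩ := (FiniteField.pow_three_bijective h3).surjective (-(1 + b ^ 4 + c ^ 4))
      refine ⟨![a, 1, b, c], ⟨⟨?_, ?_⟩, rfl⟩, rfl⟩
      · rw [fC2F2_eq_of_apply_one_eq_one ψ rfl (by simp [mul_assoc, h])]
        simp only [Matrix.cons_val]
        linear_combination ha
      · rcases mul_eq_zero.mp h with h | h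
        exacts [⟨2, h⟩, ⟨3, h⟩]
    · refine ⟨![0, 1, b, c], ⟨⟨?_, 0, rfl⟩, rfl⟩, rfl⟩
      simp only [fC2F2, Matrix.cons_val]
      linear_combination hbc.resolve_left h

theorem fC2F2_eq_zero_iff_of_apply_one_eq_zero (hF : ¬IsSquare (-1 : F)) (ψ : F) {v : Fin 4 → F}
    (hv1 : v 1 = 0) : fC2F2 ψ v = 0 ↔ v 2 = 0 ∧ v 3 = 0 := by
  have hf : fC2F2 ψ v = (v 2 ^ 2) ^ 2 + (v 3 ^ 2) ^ 2 := by simp only [fC2F2, hv1]; ring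
  simp [hf, sq_add_sq_eq_zero_iff hF]

open scoped LinearAlgebra.Projectivization in
theorem setOf_C2F2_apply_one_eq_zero (hF : ¬IsSquare (-1 : F)) (ψ : F) :
    {P : ℙ F (Fin 4 → F) | (fC2F2 ψ P.rep = 0 ∧ ∃ j, P.rep j = 0) ∧ P.rep 1 = 0} =
      {Projectivization.mk F ![1, 0, 0, 0] (by simp)} := by
  ext P
  simp only [Set.mem_ofPred_eq, Set.mem_singleton_iff]
  constructor
  · rintro ⟨⟨hf, -⟩, h1⟩
    obtain ⟨h2, h3⟩ := (fC2F2_eq_zero_iff_of_apply_one_eq_zero hF ψ h1).mp hf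
    rw [← Projectivization.mk_rep P, Projectivization.mk_eq_mk_iff']
    refine ⟨P.rep 0, funext fun i => ?_⟩
    fin_cases i <;> simp [h1, h2, h3]
  · rintro rfl
    obtain ⟨a, ha⟩ := Projectivization.exists_smul_eq_mk_rep F ![(1 : F), 0, 0, 0] (by simp)
    rw [← ha]
    refine ⟨⟨?_, 1, by simp⟩, by simp⟩
    rw [Units.smul_def, fC2F2_smul]
    simp [fC2F2]

end C2F2

open scoped LinearAlgebra.Projectivization in
/-- For `q ≢ 1 (mod 4)` and `q ≢ 1 (mod 3)`, the number of points of the `C2F2`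
pencil in `ℙ³(F_q)` with at least one zero coordinate is `3q + 1`. -/
theorem C2F2_boundary_count (F : Type) [Field F] [Fintype F]
    (hodd : Odd (Fintype.card F))
    (h4 : Fintype.card F % 4 ≠ 1) (h3 : Fintype.card F % 3 ≠ 1) (ψ : F) :
    Nat.card {P : Projectivization F (Fin 4 → F) |
        fC2F2 ψ P.rep = 0 ∧ ∃ j, P.rep j = 0} =
      3 * Fintype.card F + 1 := by
  classical
  have hq : Fintype.card F % 4 = 3 := by obtain ⟨k, hk⟩ := hodd; omega
  have hF : ¬IsSquare (-1 : F) := by rw [FiniteField.isSquare_neg_one_iff]; omega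
  set S := {P : ℙ F (Fin 4 → F) | fC2F2 ψ P.rep = 0 ∧ ∃ j, P.rep j = 0}
  have hsplit : Nat.card S =
      Nat.card ↥(S ∩ {P | P.rep 1 = 0}) + Nat.card ↥(S \ {P | P.rep 1 = 0}) := by
    simp only [Nat.card_coe_set_eq]
    exact (Set.ncard_inter_add_ncard_sdiff_eq_ncard _ _ (Set.toFinite _)).symm
  have hinf : Nat.card ↥(S ∩ {P | P.rep 1 = 0}) = 1 := by
    rw [show S ∩ {P | P.rep 1 = 0} = _ from setOf_C2F2_apply_one_eq_zero hF ψ]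
    simp
  have hchart : Nat.card ↥(S \ {P | P.rep 1 = 0}) =
      Nat.card {v : Fin 4 → F | (fC2F2 ψ v = 0 ∧ ∃ j, v j = 0) ∧ v 1 = 1} :=
    Projectivization.card_setOf_rep_apply_ne_zero (fun v => fC2F2 ψ v = 0 ∧ ∃ j, v j = 0)
      (fun a v => by simp [Units.smul_def, fC2F2_smul]) (LinearMap.proj 1)
  rw [hsplit, hinf, hchart, card_C2F2_boundary_chart h3,
    card_mul_eq_zero_or_pow_four_add_pow_four_eq_neg_one hq]
  ring
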